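/- Let ν ∈ ℝ be such that ν + 3/2 is not zero or a negative integer, and suppose ν ≥ (e/(8 sin 1 + 6 − 2e))·[4(e−1)³ + 6(e−1)² + (e+1) + 6/e − 12/e²] − 3/2. Then, writing U_ν(z) = ∑_{n≥0} ((−1/4)^n / ((3/2)_n (ν+3/2)_n)) z^n (the normalized Struve function of the first kind, case b = c = 1), the function −3(2ν+3)(U_ν − 1) belongs to K_e and the function z ↦ −3(2ν+3) z U'_ν(z) belongs to S*_e. -/

import Mathlib

open Complex Metric Set

noncomputable def poch (x : ℂ) (n : ℕ) : ℂ := ∏ k ∈ Finset.range n, (x + k)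

/-- The class `P_e`: `p` is analytic on the unit disk, `p 0 = 1`, and `p` maps the
unit disk into `exp(𝔻)` (equivalently, `p` is subordinate to `exp`). -/
def memPe (p : ℂ → ℂ) : Prop :=
  AnalyticOnNhd ℂ p (Metric.ball 0 1) ∧ p 0 = 1 ∧
    ∀ z ∈ Metric.ball (0:ℂ) 1, p z ∈ Complex.exp '' Metric.ball 0 1

/-- The class `K_e` of exponential convex functions. -/
def memKe (f : ℂ → ℂ) : Prop :=
  AnalyticOnNhd ℂ f (Metric.ball 0 1) ∧ f 0 = 0 ∧ deriv f 0 = 1 ∧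
    (∀ z ∈ Metric.ball (0:ℂ) 1, deriv f z ≠ 0) ∧
    memPe (fun z => 1 + z * deriv (deriv f) z / deriv f z)

/-- The class `S*_e` of exponential starlike functions. -/
def memSe (f : ℂ → ℂ) : Prop :=
  AnalyticOnNhd ℂ f (Metric.ball 0 1) ∧ f 0 = 0 ∧ deriv f 0 = 1 ∧
    (∀ z ∈ Metric.ball (0:ℂ) 1, z ≠ 0 → f z ≠ 0) ∧
    memPe (fun z => if z = 0 then 1 else z * deriv f z / f z)

/-- The normalized generalized Struve function of the first kind
`u_{κ,c}(z) = ∑_{n≥0} ((−c/4)^n / ((3/2)_n (κ)_n)) z^n`. -/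
noncomputable def struveU (κ c : ℂ) (z : ℂ) : ℂ :=
  ∑' n : ℕ, (-c / 4) ^ n / (poch (3/2) n * poch κ n) * z ^ n

/-!
With `κ = ν + 3/2`, the threshold on `ν` gives `κ ≥ 2`. The coefficients of `U_ν` are bounded
by `(6κ)⁻ⁿ` (from `(3/2)_n ≥ (3/2)ⁿ` and `(κ)_n ≥ κⁿ`), so `f = −6κ(U_ν − 1)` is a small
perturbation of the identity on the unit disk: `|f' − 1| ≤ 1/5` and `|f''| ≤ 1/4`. Hence
`|z f''/f'| ≤ 1/2`, and the disk `|w − 1| ≤ 1/2` lies in `exp 𝔻` because `|log w| ≤ (3/2)|w − 1|`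
there. The starlike half follows from the convex half by Alexander's relation
`z (z f')'/(z f') = 1 + z f''/f'`.
-/

section PowerSeries

noncomputable def powerSeriesSum (a : ℕ → ℂ) (z : ℂ) : ℂ := ∑' n, a n * z ^ n

def derivCoeff (a : ℕ → ℂ) (n : ℕ) : ℂ := (n + 1) * a (n + 1)

variable {a : ℕ → ℂ} {M r : ℝ}

lemma powerSeriesSum_zero (a : ℕ → ℂ) : powerSeriesSum a 0 = a 0 := by
  rw [powerSeriesSum, tsum_eq_single 0 fun n hn => by rw [zero_pow hn, mul_zero]]
  simp

lemma norm_mul_pow_le (ha : ∀ n, ‖a n‖ ≤ M * r ^ n) {z : ℂ} (hz : ‖z‖ ≤ 1) (n : ℕ) :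
    ‖a n * z ^ n‖ ≤ M * r ^ n := by
  rw [norm_mul, norm_pow]
  exact (mul_le_of_le_one_right (norm_nonneg _) (pow_le_one₀ (norm_nonneg _) hz)).trans (ha n)

lemma summable_mul_pow (hr0 : 0 ≤ r) (hr : r < 1) (ha : ∀ n, ‖a n‖ ≤ M * r ^ n) {z : ℂ}
    (hz : ‖z‖ ≤ 1) : Summable fun n => a n * z ^ n :=
  .of_norm_bounded ((summable_geometric_of_lt_one hr0 hr).mul_left M) (norm_mul_pow_le ha hz)

lemma norm_powerSeriesSum_le (hr0 : 0 ≤ r) (hr : r < 1) (ha : ∀ n, ‖a n‖ ≤ M * r ^ n) {z : ℂ}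
    (hz : ‖z‖ ≤ 1) : ‖powerSeriesSum a z‖ ≤ M / (1 - r) :=
  tsum_of_norm_bounded ((hasSum_geometric_of_lt_one hr0 hr).mul_left M) (norm_mul_pow_le ha hz)

lemma norm_powerSeriesSum_sub_le (hr0 : 0 ≤ r) (hr : r < 1) (ha : ∀ n, ‖a n‖ ≤ M * r ^ n)
    {z : ℂ} (hz : ‖z‖ ≤ 1) : ‖powerSeriesSum a z - a 0‖ ≤ M * r / (1 - r) := by
  rw [powerSeriesSum, (summable_mul_pow hr0 hr ha hz).tsum_eq_zero_add, pow_zero, mul_one,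
    add_sub_cancel_left]
  refine tsum_of_norm_bounded ((hasSum_geometric_of_lt_one hr0 hr).mul_left (M * r)) fun n => ?_
  calc ‖a (n + 1) * z ^ (n + 1)‖ ≤ M * r ^ (n + 1) := norm_mul_pow_le ha hz _
    _ = M * r * r ^ n := by ring

lemma norm_derivCoeff_le (ha : ∀ n, ‖a n‖ ≤ M * r ^ n) (n : ℕ) :
    ‖derivCoeff a n‖ ≤ M * r * (2 * r) ^ n := by
  calc ‖derivCoeff a n‖ = ((n : ℝ) + 1) * ‖a (n + 1)‖ := by
        rw [derivCoeff, norm_mul, ← Nat.cast_succ, Complex.norm_natCast, Nat.cast_succ]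
    _ ≤ 2 ^ n * (M * r ^ (n + 1)) := by gcongr; exacts [by exact_mod_cast Nat.lt_two_pow_self, ha _]
    _ = M * r * (2 * r) ^ n := by ring

lemma hasDerivAt_powerSeriesSum (hr0 : 0 ≤ r) (hr : r < 1 / 2) (ha : ∀ n, ‖a n‖ ≤ M * r ^ n)
    {z : ℂ} (hz : z ∈ ball 0 1) :
    HasDerivAt (powerSeriesSum a) (powerSeriesSum (derivCoeff a) z) z := by
  have hM : 0 ≤ M := by simpa using (norm_nonneg _).trans (ha 0)
  have hbound : ∀ n (y : ℂ), y ∈ ball 0 1 → ‖a n * (n * y ^ (n - 1))‖ ≤ M * (2 * r) ^ n := by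
    intro n y hy
    rw [mem_ball_zero_iff] at hy
    rw [norm_mul, norm_mul, norm_pow, Complex.norm_natCast]
    calc ‖a n‖ * (n * ‖y‖ ^ (n - 1)) ≤ M * r ^ n * (2 ^ n * 1) := by
          gcongr
          · exact ha n
          · exact_mod_cast Nat.lt_two_pow_self.le
          · exact pow_le_one₀ (norm_nonneg _) hy.le
      _ = M * (2 * r) ^ n := by ring
  have hsum : Summable fun n => a n * (n * z ^ (n - 1)) :=
    .of_norm_bounded ((summable_geometric_of_lt_one (by positivity) (by linarith)).mul_left M)
      fun n => hbound n z hz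
  have hderiv := hasDerivAt_tsum_of_isPreconnected
    ((summable_geometric_of_lt_one (by positivity) (by linarith)).mul_left M) isOpen_ball
    (convex_ball (0 : ℂ) 1).isPreconnected (fun n y _ => (hasDerivAt_pow n y).const_mul (a n))
    hbound (mem_ball_self one_pos) (summable_mul_pow hr0 (by linarith) ha (by simp)) hz
  have hval : ∑' n, a n * (n * z ^ (n - 1)) = powerSeriesSum (derivCoeff a) z := by
    rw [hsum.tsum_eq_zero_add, powerSeriesSum]
    simp only [derivCoeff, Nat.cast_zero, zero_mul, mul_zero, zero_add, Nat.add_sub_cancel]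
    exact tsum_congr fun n => by push_cast; ring
  exact hval ▸ hderiv

lemma analyticOnNhd_powerSeriesSum (hr0 : 0 ≤ r) (hr : r < 1 / 2)
    (ha : ∀ n, ‖a n‖ ≤ M * r ^ n) : AnalyticOnNhd ℂ (powerSeriesSum a) (ball 0 1) :=
  DifferentiableOn.analyticOnNhd (fun _ hz =>
    (hasDerivAt_powerSeriesSum hr0 hr ha hz).differentiableAt.differentiableWithinAt) isOpen_ball

end PowerSeries

section ExponentialClasses

lemma mem_exp_image_ball_of_norm_sub_one_le {w : ℂ} (hw : ‖w - 1‖ ≤ 1 / 2) :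
    w ∈ exp '' ball 0 1 := by
  have hw0 : w ≠ 0 := by rintro rfl; norm_num at hw
  refine ⟨log w, ?_, exp_log hw0⟩
  rw [mem_ball_zero_iff]
  calc ‖log w‖ = ‖log (1 + (w - 1))‖ := by rw [add_sub_cancel]
    _ ≤ 3 / 2 * ‖w - 1‖ := norm_log_one_add_half_le_self hw
    _ < 1 := by linarith

theorem memKe_of_norm_deriv_sub_one_le {f : ℂ → ℂ} {A B : ℝ}
    (hf : AnalyticOnNhd ℂ f (ball 0 1)) (hf0 : f 0 = 0) (hf'0 : deriv f 0 = 1)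
    (hA : ∀ z ∈ ball (0 : ℂ) 1, ‖deriv f z - 1‖ ≤ A)
    (hB : ∀ z ∈ ball (0 : ℂ) 1, ‖deriv (deriv f) z‖ ≤ B) (hAB : 2 * B < 1 - A) : memKe f := by
  have hB0 : 0 ≤ B := (norm_nonneg _).trans (hB 0 (mem_ball_self one_pos))
  have hlow : ∀ z ∈ ball (0 : ℂ) 1, 1 - A ≤ ‖deriv f z‖ := fun z hz => by
    have := norm_sub_norm_le (1 : ℂ) (deriv f z)
    rw [norm_one, norm_sub_rev] at this
    linarith [hA z hz]
  have hne : ∀ z ∈ ball (0 : ℂ) 1, deriv f z ≠ 0 := fun z hz h => by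
    linarith [hlow z hz, h ▸ norm_zero (E := ℂ)]
  refine ⟨hf, hf0, hf'0, hne,
    analyticOnNhd_const.add ((analyticOnNhd_id.mul hf.deriv.deriv).div hf.deriv hne), by simp,
    fun z hz => mem_exp_image_ball_of_norm_sub_one_le ?_⟩
  have hz1 : ‖z‖ ≤ 1 := (mem_ball_zero_iff.mp hz).le
  rw [add_sub_cancel_left, norm_div, norm_mul, div_le_iff₀ (by linarith [hlow z hz])]
  calc ‖z‖ * ‖deriv (deriv f) z‖ ≤ 1 * B := by gcongr; exact hB z hz
    _ ≤ 1 / 2 * ‖deriv f z‖ := by linarith [hlow z hz]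

theorem memSe_mul_deriv_of_memKe {f : ℂ → ℂ} (hf : memKe f) : memSe fun z => z * deriv f z := by
  obtain ⟨hfa, -, hf'0, hne, hpa, -, hpmem⟩ := hf
  have hderiv : ∀ z ∈ ball (0 : ℂ) 1,
      deriv (fun z => z * deriv f z) z = deriv f z + z * deriv (deriv f) z := fun z hz => by
    rw [deriv_fun_mul differentiableAt_fun_id (hfa.deriv z hz).differentiableAt, deriv_id'',
      one_mul]
  have hq : EqOn (fun z => 1 + z * deriv (deriv f) z / deriv f z)
      (fun z => if z = 0 then 1 else z * deriv (fun z => z * deriv f z) z / (z * deriv f z))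
      (ball 0 1) := fun z hz => by
    by_cases hz0 : z = 0
    · simp [hz0]
    · have := hne z hz
      simp only [if_neg hz0, hderiv z hz]
      field_simp
  refine ⟨analyticOnNhd_id.mul hfa.deriv, by simp, by simp [hderiv 0 (mem_ball_self one_pos), hf'0],
    fun z hz hz0 => mul_ne_zero hz0 (hne z hz), hpa.congr isOpen_ball hq, by simp,
    fun z hz => hq hz ▸ hpmem z hz⟩

end ExponentialClasses

section Struve

lemma pow_le_norm_poch {x : ℝ} (hx : 0 ≤ x) (n : ℕ) : x ^ n ≤ ‖poch x n‖ := by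
  rw [poch, norm_prod]
  calc x ^ n = ∏ _k ∈ Finset.range n, x := by simp
    _ ≤ ∏ k ∈ Finset.range n, ‖(x : ℂ) + k‖ := Finset.prod_le_prod (fun _ _ => hx) fun k _ =>
        (show x ≤ ((x : ℂ) + k).re by simp).trans (re_le_norm _)

noncomputable def struveCoeff (κ c : ℂ) (n : ℕ) : ℂ := (-c / 4) ^ n / (poch (3/2) n * poch κ n)

lemma struveU_eq_powerSeriesSum (κ c : ℂ) : struveU κ c = powerSeriesSum (struveCoeff κ c) := rfl

lemma norm_struveCoeff_le {κ : ℝ} (hκ : 0 < κ) (c : ℂ) (n : ℕ) :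
    ‖struveCoeff κ c n‖ ≤ 1 * (‖c‖ / (6 * κ)) ^ n := by
  have h32 := pow_le_norm_poch (x := 3 / 2) (by norm_num) n
  push_cast at h32
  have hκn := pow_le_norm_poch hκ.le n
  have hpos : 0 < ‖poch (3 / 2) n‖ * ‖poch κ n‖ :=
    mul_pos ((by positivity : (0 : ℝ) < _).trans_le h32)
      ((by positivity : (0 : ℝ) < _).trans_le hκn)
  rw [struveCoeff, norm_div, norm_mul, norm_pow, div_le_iff₀ hpos, one_mul]
  calc ‖-c / 4‖ ^ n = (‖c‖ / (6 * κ)) ^ n * ((3 / 2) ^ n * κ ^ n) := by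
        rw [← mul_pow, ← mul_pow, norm_div, norm_neg, Complex.norm_ofNat]
        congr 1
        field_simp
        ring
    _ ≤ (‖c‖ / (6 * κ)) ^ n * (‖poch (3 / 2) n‖ * ‖poch κ n‖) := by gcongr

lemma struveCoeff_zero (κ c : ℂ) : struveCoeff κ c 0 = 1 := by simp [struveCoeff, poch]

lemma struveCoeff_one (κ c : ℂ) : struveCoeff κ c 1 = -c / (6 * κ) := by
  simp [struveCoeff, poch]
  ring

lemma one_half_le_struve_threshold :
    1 / 2 ≤ Real.exp 1 / (8 * Real.sin 1 + 6 - 2 * Real.exp 1) *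
        (4 * (Real.exp 1 - 1) ^ 3 + 6 * (Real.exp 1 - 1) ^ 2 + (Real.exp 1 + 1) +
          6 / Real.exp 1 - 12 / (Real.exp 1) ^ 2) - 3 / 2 := by
  have he2 : 2 ≤ Real.exp 1 := by linarith [Real.add_one_le_exp 1]
  have he3 : Real.exp 1 < 3 := by linarith [Real.exp_one_lt_d9]
  have hsin0 : 0 < Real.sin 1 :=
    Real.sin_pos_of_pos_of_lt_pi one_pos (by linarith [Real.pi_gt_three])
  have hsin1 : Real.sin 1 ≤ 1 := Real.sin_le_one 1
  have hd : 0 < 8 * Real.sin 1 + 6 - 2 * Real.exp 1 := by linarith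
  have htail : 0 ≤ 6 / Real.exp 1 - 12 / Real.exp 1 ^ 2 := by
    rw [div_sub_div _ _ (by positivity) (by positivity)]
    apply div_nonneg _ (by positivity)
    nlinarith
  have hX : 13 ≤ 4 * (Real.exp 1 - 1) ^ 3 + 6 * (Real.exp 1 - 1) ^ 2 + (Real.exp 1 + 1) +
      6 / Real.exp 1 - 12 / (Real.exp 1) ^ 2 := by
    nlinarith [one_le_pow₀ (show 1 ≤ Real.exp 1 - 1 by linarith) (n := 3),
      one_le_pow₀ (show 1 ≤ Real.exp 1 - 1 by linarith) (n := 2)]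
  rw [div_mul_eq_mul_div, le_sub_iff_add_le, le_div_iff₀ hd]
  nlinarith

theorem memKe_neg_six_mul_struveU_sub_one {κ : ℝ} (hκ : 2 ≤ κ) :
    memKe fun z => -6 * (κ : ℂ) * (struveU κ 1 z - 1) := by
  rw [struveU_eq_powerSeriesSum]
  set a := struveCoeff κ 1
  set r := 1 / (6 * κ)
  have hκ0 : (κ : ℂ) ≠ 0 := ofReal_ne_zero.mpr (by linarith)
  have hr0 : 0 ≤ r := by positivity
  have hr : r ≤ 1 / 12 := by
    rw [div_le_div_iff₀ (by linarith) (by norm_num)]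
    linarith
  have hκr : 6 * κ * r = 1 := by simp only [r]; field_simp
  have ha : ∀ n, ‖a n‖ ≤ 1 * r ^ n := by
    simpa [a, r] using norm_struveCoeff_le (κ := κ) (by linarith) 1
  have ha' := norm_derivCoeff_le ha
  have ha'' := norm_derivCoeff_le ha'
  have hF : ∀ z ∈ ball (0 : ℂ) 1, HasDerivAt (fun z => -6 * (κ : ℂ) * (powerSeriesSum a z - 1))
      (-6 * κ * powerSeriesSum (derivCoeff a) z) z := fun z hz =>
    ((hasDerivAt_powerSeriesSum hr0 (by linarith) ha hz).sub_const 1).const_mul _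
  have hF' : ∀ z ∈ ball (0 : ℂ) 1,
      HasDerivAt (deriv fun z => -6 * (κ : ℂ) * (powerSeriesSum a z - 1))
        (-6 * κ * powerSeriesSum (derivCoeff (derivCoeff a)) z) z := fun z hz =>
    ((hasDerivAt_powerSeriesSum (by positivity) (by linarith) ha' hz).const_mul _)
      |>.congr_of_eventuallyEq
        (EqOn.eventuallyEq_of_mem (fun w hw => (hF w hw).deriv) (isOpen_ball.mem_nhds hz))
  have hnorm : ‖-6 * (κ : ℂ)‖ = 6 * κ := by
    rw [norm_mul, norm_neg, Complex.norm_ofNat, norm_real, Real.norm_of_nonneg (by linarith)]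
  have ha1 : -6 * (κ : ℂ) * derivCoeff a 0 = 1 := by
    simp only [derivCoeff, a, Nat.cast_zero, zero_add, struveCoeff_one]
    field_simp
  refine memKe_of_norm_deriv_sub_one_le (A := 1 / 5) (B := 1 / 4)
    (analyticOnNhd_const.mul ((analyticOnNhd_powerSeriesSum hr0 (by linarith) ha).sub
      analyticOnNhd_const))
    (by rw [powerSeriesSum_zero, show a 0 = 1 from struveCoeff_zero _ _, sub_self, mul_zero])
    (by rw [(hF 0 (mem_ball_self one_pos)).deriv, powerSeriesSum_zero, ha1]) (fun z hz => ?_)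
    (fun z hz => ?_) (by norm_num)
  · have hz1 : ‖z‖ ≤ 1 := (mem_ball_zero_iff.mp hz).le
    rw [(hF z hz).deriv, ← ha1, ← mul_sub, norm_mul, hnorm]
    calc 6 * κ * ‖powerSeriesSum (derivCoeff a) z - derivCoeff a 0‖
        ≤ 6 * κ * (1 * r * (2 * r) / (1 - 2 * r)) := by
          gcongr
          exact norm_powerSeriesSum_sub_le (by positivity) (by linarith) ha' hz1
      _ ≤ 1 / 5 := by
          rw [← mul_div_assoc, div_le_iff₀ (by linarith)]
          nlinarith
  · have hz1 : ‖z‖ ≤ 1 := (mem_ball_zero_iff.mp hz).le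
    rw [(hF' z hz).deriv, norm_mul, hnorm]
    calc 6 * κ * ‖powerSeriesSum (derivCoeff (derivCoeff a)) z‖
        ≤ 6 * κ * (1 * r * (2 * r) / (1 - 2 * (2 * r))) := by
          gcongr
          exact norm_powerSeriesSum_le (by positivity) (by linarith) ha'' hz1
      _ ≤ 1 / 4 := by
          rw [← mul_div_assoc, div_le_iff₀ (by linarith)]
          nlinarith

end Struve

theorem struve_first_kind_convex_starlike_general (ν : ℝ)
    (h : ν ≥ Real.exp 1 / (8 * Real.sin 1 + 6 - 2 * Real.exp 1) *
        (4 * (Real.exp 1 - 1) ^ 3 + 6 * (Real.exp 1 - 1) ^ 2 + (Real.exp 1 + 1) +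
          6 / Real.exp 1 - 12 / (Real.exp 1) ^ 2) - 3 / 2) :
    memKe (fun z => -3 * (2 * (ν : ℂ) + 3) * (struveU ((ν : ℂ) + 3 / 2) 1 z - 1)) ∧
    memSe (fun z => -3 * (2 * (ν : ℂ) + 3) * z * deriv (struveU ((ν : ℂ) + 3 / 2) 1) z) := by
  have hκ : 2 ≤ ν + 3 / 2 := by linarith [one_half_le_struve_threshold]
  have hκc : (ν : ℂ) + 3 / 2 = ((ν + 3 / 2 : ℝ) : ℂ) := by push_cast; ring
  have hc : -3 * (2 * (ν : ℂ) + 3) = -6 * ((ν + 3 / 2 : ℝ) : ℂ) := by push_cast; ring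
  have hKe := memKe_neg_six_mul_struveU_sub_one hκ
  simp only [hκc, hc]
  refine ⟨hKe, ?_⟩
  convert memSe_mul_deriv_of_memKe hKe using 2 with z
  simp only [deriv_const_mul_field', deriv_sub_const]
  ring

/-- For the normalized Struve function `U_ν = u_{ν+3/2, 1}` (case `b = c = 1`),
under the stated condition on `ν`, the function `−3(2ν+3)(U_ν − 1)` is exponential
convex and `z ↦ −3(2ν+3) z U'_ν(z)` is exponential starlike. -/
theorem struve_first_kind_convex_starlike (ν : ℝ) (hν : ∀ n : ℕ, ν + 3 / 2 ≠ -(n : ℝ))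
    (h : ν ≥ Real.exp 1 / (8 * Real.sin 1 + 6 - 2 * Real.exp 1) *
        (4 * (Real.exp 1 - 1) ^ 3 + 6 * (Real.exp 1 - 1) ^ 2 + (Real.exp 1 + 1) +
          6 / Real.exp 1 - 12 / (Real.exp 1) ^ 2) - 3 / 2) :
    memKe (fun z => -3 * (2 * (ν : ℂ) + 3) * (struveU ((ν : ℂ) + 3 / 2) 1 z - 1)) ∧
    memSe (fun z => -3 * (2 * (ν : ℂ) + 3) * z * deriv (struveU ((ν : ℂ) + 3 / 2) 1) z) :=
  struve_first_kind_convex_starlike_general ν h
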